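/- For square matrices A, B, Q_c of size n, the iterated integral ∫₀ᵗ exp(Bτ) Q_c (∫₀^τ exp(Ar) dr) dτ equals exp(Bt) · H₃(t), where H₃(t) is the top-right n×n block of exp(H_c t) with H_c the 3n×3n block matrix [[-B, Q_c, 0],[0, 0, I],[0, 0, A]]. -/

import Mathlib

/-!
Write `E(t) = exp (t • M)` for a block upper triangular `M = [[P, C], [0, S]]`. Reading off blocks
of `E' = M E` gives `E₂₂' = S E₂₂` and `E₁₂' = P E₁₂ + C E₂₂`, so variation of constants yields
`E₂₂(t) = exp (t S)` and `exp (-t P) E₁₂(t) = ∫₀ᵗ exp (-s P) C exp (s S) ds`. For the theorem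
take `P = -B`, `C = [Q_c 0]` and `S = [[0, I], [0, A]]`: the same formula with `P = 0`, `C = I`
shows that the top-right block of `exp (s S)` is `∫₀ˢ exp (r A) dr`, and the last column of
`[Q_c 0] exp (s S)` is `Q_c` times that block.
-/

open Matrix MeasureTheory intervalIntegral

attribute [local instance] Matrix.frobeniusNormedAddCommGroup Matrix.frobeniusNormedSpace
attribute [local instance] Matrix.frobeniusNormedRing Matrix.frobeniusNormedAlgebra

open NormedSpace

theorem continuous_exp_smul {𝕂 𝔸 : Type*} [RCLike 𝕂] [NormedRing 𝔸] [NormedAlgebra 𝕂 𝔸]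
    [CompleteSpace 𝔸] (x : 𝔸) : Continuous fun s : 𝕂 => exp (s • x) :=
  continuous_iff_continuousAt.2 fun s => (hasDerivAt_exp_smul_const x s).continuousAt

section Derivatives

variable {l m : Type*} [Fintype l] [Fintype m]

theorem HasDerivAt.matrix_mul {n : Type*} [Fintype n] {f : ℝ → Matrix l m ℝ}
    {g : ℝ → Matrix m n ℝ} {f' : Matrix l m ℝ} {g' : Matrix m n ℝ} {u : ℝ}
    (hf : HasDerivAt f f' u) (hg : HasDerivAt g g' u) :
    HasDerivAt (fun t => f t * g t) (f' * g u + f u * g') u :=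
  ((mulLinearMap (l := l) (m := m) (n := n) (A := ℝ) ℝ).toContinuousBilinearMap
    |>.hasDerivAt_of_bilinear (fun _ => hf) (fun _ => hg)).congr_deriv (add_comm _ _)

theorem HasDerivAt.matrix_toBlocks₁₂ {f : ℝ → Matrix (l ⊕ m) (l ⊕ m) ℝ}
    {f' : Matrix (l ⊕ m) (l ⊕ m) ℝ} {u : ℝ} (hf : HasDerivAt f f' u) :
    HasDerivAt (fun t => (f t).toBlocks₁₂) f'.toBlocks₁₂ u :=
  hasDerivAt_pi.2 fun _ => hasDerivAt_pi.2 fun _ => hasDerivAt_pi.1 (hasDerivAt_pi.1 hf _) _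

theorem HasDerivAt.matrix_toBlocks₂₂ {f : ℝ → Matrix (l ⊕ m) (l ⊕ m) ℝ}
    {f' : Matrix (l ⊕ m) (l ⊕ m) ℝ} {u : ℝ} (hf : HasDerivAt f f' u) :
    HasDerivAt (fun t => (f t).toBlocks₂₂) f'.toBlocks₂₂ u :=
  hasDerivAt_pi.2 fun _ => hasDerivAt_pi.2 fun _ => hasDerivAt_pi.1 (hasDerivAt_pi.1 hf _) _

end Derivatives

namespace Matrix

variable {l m : Type*} [Fintype m]

theorem mul_toCols₂ {n₁ n₂ α : Type*} [Mul α] [AddCommMonoid α] (X : Matrix l m α)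
    (Y : Matrix m (n₁ ⊕ n₂) α) :
    X * Y.toCols₂ = (X * Y).toCols₂ :=
  rfl

variable [Fintype l]

theorem toCols₂_intervalIntegral {n₁ n₂ : Type*} [Fintype n₁] [Fintype n₂]
    {f : ℝ → Matrix l (n₁ ⊕ n₂) ℝ} (hf : Continuous f) (a b : ℝ) :
    (∫ s in a..b, f s).toCols₂ = ∫ s in a..b, (f s).toCols₂ :=
  ((LinearMap.toContinuousLinearMap
      { toFun := toCols₂, map_add' := fun _ _ => rfl, map_smul' := fun _ _ => rfl } :
      Matrix l (n₁ ⊕ n₂) ℝ →L[ℝ] Matrix l n₂ ℝ).intervalIntegral_comp_comm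
    (hf.intervalIntegrable a b)).symm

theorem toBlocks₁₂_fromBlocks_zero₂₁_mul (P : Matrix l l ℝ) (C : Matrix l m ℝ)
    (S : Matrix m m ℝ) (X : Matrix (l ⊕ m) (l ⊕ m) ℝ) :
    (fromBlocks P C 0 S * X).toBlocks₁₂ = P * X.toBlocks₁₂ + C * X.toBlocks₂₂ := by
  ext i j
  simp [mul_apply, Fintype.sum_sum_type, toBlocks₁₂, toBlocks₂₂]

theorem toBlocks₂₂_fromBlocks_zero₂₁_mul (P : Matrix l l ℝ) (C : Matrix l m ℝ)
    (S : Matrix m m ℝ) (X : Matrix (l ⊕ m) (l ⊕ m) ℝ) :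
    (fromBlocks P C 0 S * X).toBlocks₂₂ = S * X.toBlocks₂₂ := by
  ext i j
  simp [mul_apply, Fintype.sum_sum_type, toBlocks₂₂]

variable [DecidableEq l]

theorem exp_smul_neg_mul_eq_add_integral_of_hasDerivAt {P : Matrix l l ℝ}
    {G g : ℝ → Matrix l m ℝ} (hG : ∀ u, HasDerivAt G (P * G u + g u) u) (hg : Continuous g)
    (t : ℝ) :
    exp (t • -P) * G t = G 0 + ∫ s in 0..t, exp (s • -P) * g s := by
  have hderiv (u : ℝ) :
      HasDerivAt (fun s => exp (s • -P) * G s) (exp (u • -P) * g u) u := by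
    refine ((hasDerivAt_exp_smul_const (-P) u).matrix_mul (hG u)).congr_deriv ?_
    rw [Matrix.mul_add, ← Matrix.mul_assoc, Matrix.mul_neg, Matrix.neg_mul]
    exact neg_add_cancel_left _ _
  have hcont : Continuous fun s => exp (s • -P) * g s :=
    (continuous_exp_smul _).matrix_mul hg
  rw [integral_eq_sub_of_hasDerivAt (fun u _ => hderiv u) (hcont.intervalIntegrable 0 t)]
  simp

variable [DecidableEq m]

theorem toBlocks₂₂_exp_smul_fromBlocks (P : Matrix l l ℝ) (C : Matrix l m ℝ)
    (S : Matrix m m ℝ) (t : ℝ) : (exp (t • fromBlocks P C 0 S)).toBlocks₂₂ = exp (t • S) := by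
  have hderiv (u : ℝ) : HasDerivAt (fun s => (exp (s • fromBlocks P C 0 S)).toBlocks₂₂)
      (S * (exp (u • fromBlocks P C 0 S)).toBlocks₂₂ + 0) u := by
    rw [add_zero, ← toBlocks₂₂_fromBlocks_zero₂₁_mul P C]
    exact (hasDerivAt_exp_smul_const' _ u).matrix_toBlocks₂₂
  have h := exp_smul_neg_mul_eq_add_integral_of_hasDerivAt hderiv continuous_const t
  simp only [smul_neg, zero_smul, exp_zero, Matrix.mul_zero, intervalIntegral.integral_zero,
    add_zero, ← fromBlocks_one, toBlocks_fromBlocks₂₂] at h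
  calc (exp (t • fromBlocks P C 0 S)).toBlocks₂₂
      = exp (t • S) * exp (-(t • S)) * (exp (t • fromBlocks P C 0 S)).toBlocks₂₂ := by
        rw [← Matrix.exp_add_of_commute _ _ (Commute.refl (t • S)).neg_right, add_neg_cancel,
          exp_zero, Matrix.one_mul]
    _ = exp (t • S) := by rw [Matrix.mul_assoc, h, Matrix.mul_one]

theorem exp_smul_neg_mul_toBlocks₁₂_exp_smul_fromBlocks (P : Matrix l l ℝ) (C : Matrix l m ℝ)
    (S : Matrix m m ℝ) (t : ℝ) :
    exp (t • -P) * (exp (t • fromBlocks P C 0 S)).toBlocks₁₂ =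
      ∫ s in 0..t, exp (s • -P) * C * exp (s • S) := by
  have hderiv (u : ℝ) : HasDerivAt (fun s => (exp (s • fromBlocks P C 0 S)).toBlocks₁₂)
      (P * (exp (u • fromBlocks P C 0 S)).toBlocks₁₂ + C * exp (u • S)) u := by
    rw [← toBlocks₂₂_exp_smul_fromBlocks P C, ← toBlocks₁₂_fromBlocks_zero₂₁_mul]
    exact (hasDerivAt_exp_smul_const' _ u).matrix_toBlocks₁₂
  rw [exp_smul_neg_mul_eq_add_integral_of_hasDerivAt hderiv
    (continuous_const.matrix_mul (continuous_exp_smul S)) t]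
  simp [Matrix.mul_assoc, ← fromBlocks_one]

theorem toBlocks₁₂_exp_smul_fromBlocks_zero_one (S : Matrix m m ℝ) (t : ℝ) :
    (exp (t • (fromBlocks 0 1 0 S : Matrix (m ⊕ m) (m ⊕ m) ℝ))).toBlocks₁₂ =
      ∫ s in 0..t, exp (s • S) := by
  simpa using exp_smul_neg_mul_toBlocks₁₂_exp_smul_fromBlocks (0 : Matrix m m ℝ) 1 S t

end Matrix

/-- For square matrices `A, B, Q_c` of size `n`,
`∫₀ᵗ exp(Bτ) Q_c (∫₀^τ exp(Ar) dr) dτ = exp(Bt) · H₃(t)` where `H₃(t)` is the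
top-right `n×n` block of `exp(H_c t)` with `H_c = [[-B, Q_c, 0], [0, 0, I], [0, 0, A]]`. -/
theorem integral_type3 (n : ℕ) (A B Qc : Matrix (Fin n) (Fin n) ℝ) (t : ℝ) :
    (∫ τ in (0:ℝ)..t,
        NormedSpace.exp (τ • B) * Qc * (∫ r in (0:ℝ)..τ, NormedSpace.exp (r • A)))
      = NormedSpace.exp (t • B) *
        ((NormedSpace.exp
            (t • (Matrix.fromBlocks (-B) (Matrix.fromCols Qc 0) 0
              (Matrix.fromBlocks 0 1 0 A) :
              Matrix (Fin n ⊕ (Fin n ⊕ Fin n)) (Fin n ⊕ (Fin n ⊕ Fin n)) ℝ))).toBlocks₁₂).toCols₂ := by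
  set N : Matrix (Fin n ⊕ Fin n) (Fin n ⊕ Fin n) ℝ := fromBlocks 0 1 0 A
  have hvl := exp_smul_neg_mul_toBlocks₁₂_exp_smul_fromBlocks (-B) (fromCols Qc 0) N t
  rw [neg_neg] at hvl
  rw [mul_toCols₂, hvl, toCols₂_intervalIntegral]
  · refine integral_congr fun s _ => ?_
    have hN : (fromCols Qc 0 : Matrix (Fin n) (Fin n ⊕ Fin n) ℝ) * (exp (s • N)).toCols₂ =
        Qc * ∫ r in 0..s, exp (r • A) := by
      rw [← toBlocks₁₂_exp_smul_fromBlocks_zero_one]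
      ext i j
      simp [N, mul_apply, Fintype.sum_sum_type, toBlocks₁₂]
    rw [← mul_toCols₂, Matrix.mul_assoc, Matrix.mul_assoc, hN]
  · exact ((continuous_exp_smul B).matrix_mul continuous_const).matrix_mul (continuous_exp_smul N)
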